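/- Let $\Delta \in (0,1]$ and $\zeta(z) = z - \Delta\frac{1}{\pi}(\sqrt{1-(1-2z)^2} - (1-2z)\arccos(1-2z))$. Define the inverse cosine distance map $\omega : (1,\infty) \to (1,\infty)$ by $\omega(w) = \zeta(w^{-2})^{-1/2}$. Then $\omega$ is convex, and $\omega'(w) \leq 1$ for all $w \in (1,\infty)$. -/

import Mathlib

open Real

/-- The squared cosine distance map. -/
noncomputable def zeta (Δ z : ℝ) : ℝ :=
  z - Δ * (1 / π) *
    (Real.sqrt (1 - (1 - 2 * z) ^ 2) - (1 - 2 * z) * Real.arccos (1 - 2 * z))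

/-- The inverse cosine distance map `ω(w) = ζ(w⁻²)^{-1/2}`. -/
noncomputable def omegaMap (Δ w : ℝ) : ℝ := (Real.sqrt (zeta Δ ((w ^ 2)⁻¹)))⁻¹

/-!
Substituting `z = (1 - cos θ) / 2`, `θ ∈ (0, π)`, turns `ζ(z)` into
`(1 - cos θ) / 2 - (Δ / π) (sin θ - θ cos θ)` and `ζ'(z)` into `1 - 2Δθ / π`, so each claim
becomes an elementary inequality in `θ`, proved from the sign of a derivative.
With `z = w⁻²` one has `ω' = ζ'(z) / (w³ ζ(z)^{3/2})`; the bound `ω' ≤ 1` follows from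
`z (1 + 2ζ') ≤ 3ζ` and `27 a² ≤ (1 + 2a)³` for `a = ζ' > 0`. After clearing positive denominators,
`ω'' ≥ 0` becomes a quadratic inequality in `Δ` whose linear coefficient
`3 sin² θ - 3θ sin θ + 2 (1 - cos θ)²` is positive (by a half-angle argument); it absorbs the
quadratic term with the weight `π - 2θΔ ≥ 0` for `θ ≤ π/2`, and `1 - Δ ≥ 0` for `θ > π/2`.
-/

open Set

lemma pos_of_hasDerivAt_pos {f f' : ℝ → ℝ} {a b x : ℝ} (hf : ∀ y, HasDerivAt f (f' y) y)
    (ha : 0 ≤ f a) (hf' : ∀ y ∈ Ioo a b, 0 < f' y) (hx : x ∈ Ioc a b) : 0 < f x := by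
  have hmono : StrictMonoOn f (Icc a b) :=
    strictMonoOn_of_hasDerivWithinAt_pos (convex_Icc a b)
      (fun y _ => (hf y).continuousAt.continuousWithinAt)
      (fun y _ => (hf y).hasDerivWithinAt) (by simpa only [interior_Icc] using hf')
  exact ha.trans_lt (hmono (left_mem_Icc.2 (hx.1.le.trans hx.2)) (Ioc_subset_Icc_self hx) hx.1)

lemma pos_of_hasDerivAt_neg {f f' : ℝ → ℝ} {a b x : ℝ} (hf : ∀ y, HasDerivAt f (f' y) y)
    (hb : 0 ≤ f b) (hf' : ∀ y ∈ Ioo a b, f' y < 0) (hx : x ∈ Ico a b) : 0 < f x := by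
  have hanti : StrictAntiOn f (Icc a b) :=
    strictAntiOn_of_hasDerivWithinAt_neg (convex_Icc a b)
      (fun y _ => (hf y).continuousAt.continuousWithinAt)
      (fun y _ => (hf y).hasDerivWithinAt) (by simpa only [interior_Icc] using hf')
  exact hb.trans_lt (hanti (Ico_subset_Icc_self hx) (right_mem_Icc.2 (hx.1.trans hx.2.le)) hx.2)

lemma sin_sub_mul_cos_pos {θ : ℝ} (hθ : θ ∈ Ioc 0 π) : 0 < sin θ - θ * cos θ :=
  pos_of_hasDerivAt_pos (f := fun x => sin x - x * cos x) (f' := fun x => x * sin x)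
    (fun x => ((hasDerivAt_sin x).sub ((hasDerivAt_id x).mul (hasDerivAt_cos x))).congr_deriv
      (by simp only [id]; ring))
    (by simp) (fun x hx => mul_pos hx.1 (sin_pos_of_pos_of_lt_pi hx.1 hx.2)) hθ

lemma mul_sin_lt_two_sub_two_mul_cos {θ : ℝ} (hθ : θ ∈ Ioc 0 π) :
    θ * sin θ < 2 - 2 * cos θ := by
  have := pos_of_hasDerivAt_pos (f := fun x => 2 - 2 * cos x - x * sin x)
    (f' := fun x => sin x - x * cos x)
    (fun x => (((hasDerivAt_const x 2).sub ((hasDerivAt_cos x).const_mul 2)).sub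
      ((hasDerivAt_id x).mul (hasDerivAt_sin x))).congr_deriv (by simp only [id]; ring))
    (by simp) (fun x hx => sin_sub_mul_cos_pos (Ioo_subset_Ioc_self hx)) hθ
  linarith

lemma three_mul_sin_lt {θ : ℝ} (hθ : θ ∈ Ioc 0 π) : 3 * sin θ < 2 * θ + θ * cos θ := by
  have := pos_of_hasDerivAt_pos (f := fun x => 2 * x + x * cos x - 3 * sin x)
    (f' := fun x => 2 - 2 * cos x - x * sin x)
    (fun x => ((((hasDerivAt_id x).const_mul 2).add ((hasDerivAt_id x).mul (hasDerivAt_cos x))).sub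
      ((hasDerivAt_sin x).const_mul 3)).congr_deriv (by simp only [id]; ring))
    (by simp)
    (fun x hx => by linarith [mul_sin_lt_two_sub_two_mul_cos (Ioo_subset_Ioc_self hx)]) hθ
  linarith

lemma sin_sub_mul_cos_lt {θ : ℝ} (hθ : θ ∈ Ioo 0 π) :
    sin θ - θ * cos θ < π / 2 * (1 - cos θ) := by
  set f : ℝ → ℝ := fun x => π / 2 * (1 - cos x) - (sin x - x * cos x)
  have hf : ∀ x, HasDerivAt f (sin x * (π / 2 - x)) x := fun x =>
    (((hasDerivAt_const x 1).sub (hasDerivAt_cos x)).const_mul (π / 2) |>.sub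
      ((hasDerivAt_sin x).sub ((hasDerivAt_id x).mul (hasDerivAt_cos x)))).congr_deriv
      (by simp only [id]; ring)
  suffices 0 < f θ by simp only [f] at this; linarith
  rcases le_or_gt θ (π / 2) with hle | hgt
  · refine pos_of_hasDerivAt_pos hf (by simp [f]) (fun x hx => ?_) ⟨hθ.1, hle⟩
    exact mul_pos (sin_pos_of_pos_of_lt_pi hx.1 (by linarith [hx.2, pi_pos])) (by linarith [hx.2])
  · refine pos_of_hasDerivAt_neg hf (by norm_num [f]) (fun x hx => ?_) ⟨hgt.le, hθ.2⟩
    exact mul_neg_of_pos_of_neg (sin_pos_of_pos_of_lt_pi (by linarith [hx.1, pi_pos]) hx.2)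
      (by linarith [hx.1])

lemma sin_mul_cos_lt {t : ℝ} (ht : 0 < t) : sin t * cos t < t := by
  have := sin_lt (by linarith : 0 < 2 * t)
  rw [sin_two_mul] at this
  linarith

lemma three_mul_mul_cos_lt {t : ℝ} (ht : t ∈ Ioc 0 (π / 2)) :
    3 * t * cos t < 3 * sin t - sin t ^ 3 := by
  have := pos_of_hasDerivAt_pos (f := fun x => 3 * sin x - sin x ^ 3 - 3 * x * cos x)
    (f' := fun x => 3 * sin x * (x - sin x * cos x))
    (fun x => ((((hasDerivAt_sin x).const_mul 3).sub ((hasDerivAt_sin x).pow 3)).sub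
      (((hasDerivAt_id x).const_mul 3).mul (hasDerivAt_cos x))).congr_deriv
      (by simp only [id]; push_cast; ring))
    (by simp)
    (fun x hx => mul_pos
      (mul_pos three_pos (sin_pos_of_pos_of_lt_pi hx.1 (by linarith [hx.2, pi_pos])))
      (by linarith [sin_mul_cos_lt hx.1])) ht
  linarith

lemma three_mul_mul_sin_lt {θ : ℝ} (hθ : θ ∈ Ioc 0 π) :
    3 * θ * sin θ < 3 * sin θ ^ 2 + 2 * (1 - cos θ) ^ 2 := by
  set t := θ / 2
  have hθt : θ = 2 * t := by ring
  have hsin : 0 < sin t := sin_pos_of_pos_of_lt_pi (by linarith [hθ.1]) (by linarith [hθ.2, pi_pos])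
  have hhalf := three_mul_mul_cos_lt (t := t) ⟨by linarith [hθ.1], by linarith [hθ.2]⟩
  rw [hθt, sin_two_mul, cos_two_mul]
  nlinarith [mul_lt_mul_of_pos_left hhalf hsin, sin_sq_add_cos_sq t]

lemma convexity_trig_inequality {Δ θ : ℝ} (hΔ : Δ ∈ Icc 0 1) (hθ : θ ∈ Ioo 0 π) :
    0 ≤ Δ * π * (3 * sin θ ^ 2 - 3 * θ * sin θ + 2 * (1 - cos θ) ^ 2)
      + Δ ^ 2 * (6 * θ * sin θ * (θ - sin θ) - 4 * (1 - cos θ) * (sin θ - θ * cos θ)) := by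
  obtain ⟨hΔ0, hΔ1⟩ := hΔ
  have ha : 0 ≤ 3 * sin θ ^ 2 - 3 * θ * sin θ + 2 * (1 - cos θ) ^ 2 := by
    linarith [three_mul_mul_sin_lt (Ioo_subset_Ioc_self hθ)]
  have hsin : 0 ≤ θ - sin θ := by linarith [sin_le hθ.1.le]
  have hcos : 0 ≤ 1 - cos θ := by linarith [cos_le_one θ]
  rcases le_or_gt θ (π / 2) with hle | hgt
  · have hπ : 0 ≤ π - 2 * θ * Δ := by nlinarith [mul_le_mul_of_nonneg_left hΔ1 hθ.1.le]
    linear_combination mul_nonneg (mul_nonneg hΔ0 hπ) ha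
      + mul_nonneg (sq_nonneg Δ) (mul_nonneg (mul_nonneg zero_le_four hcos) hsin)
  · have hk : 0 ≤ π * (1 - cos θ) + 2 * θ * cos θ - 2 * sin θ := by
      linarith [sin_sub_mul_cos_lt hθ]
    have hs : 0 ≤ 3 * sin θ * (2 * θ - π) :=
      mul_nonneg (by linarith [sin_nonneg_of_nonneg_of_le_pi hθ.1.le hθ.2.le]) (by linarith)
    linear_combination mul_nonneg (mul_nonneg (mul_nonneg hΔ0 (sub_nonneg.2 hΔ1)) pi_pos.le) ha
      + mul_nonneg (sq_nonneg Δ) (mul_nonneg hs hsin)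
      + mul_nonneg (sq_nonneg Δ) (mul_nonneg (mul_nonneg zero_le_two hcos) hk)

noncomputable def zetaDeriv (Δ z : ℝ) : ℝ := 1 - 2 * Δ / π * arccos (1 - 2 * z)

lemma exists_eq_one_sub_cos_div_two {z : ℝ} (hz : z ∈ Ioo 0 1) :
    ∃ θ ∈ Ioo 0 π, z = (1 - cos θ) / 2 := by
  refine ⟨arccos (1 - 2 * z),
    ⟨arccos_pos.2 (by linarith [hz.1]), arccos_lt_pi.2 (by linarith [hz.2])⟩, ?_⟩
  rw [cos_arccos (by linarith [hz.2]) (by linarith [hz.1])]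
  ring

lemma one_sub_two_mul_one_sub_cos_div_two (θ : ℝ) : 1 - 2 * ((1 - cos θ) / 2) = cos θ := by ring

lemma sqrt_one_sub_one_sub_two_mul_sq {θ : ℝ} (hθ : θ ∈ Icc 0 π) :
    √(1 - (1 - 2 * ((1 - cos θ) / 2)) ^ 2) = sin θ := by
  rw [one_sub_two_mul_one_sub_cos_div_two, sin_eq_sqrt_one_sub_cos_sq hθ.1 hθ.2]

lemma zeta_one_sub_cos_div_two (Δ : ℝ) {θ : ℝ} (hθ : θ ∈ Icc 0 π) :
    zeta Δ ((1 - cos θ) / 2) = (1 - cos θ) / 2 - Δ / π * (sin θ - θ * cos θ) := by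
  rw [zeta, sqrt_one_sub_one_sub_two_mul_sq hθ, one_sub_two_mul_one_sub_cos_div_two,
    arccos_cos hθ.1 hθ.2]
  ring

lemma zetaDeriv_one_sub_cos_div_two (Δ : ℝ) {θ : ℝ} (hθ : θ ∈ Icc 0 π) :
    zetaDeriv Δ ((1 - cos θ) / 2) = 1 - 2 * Δ / π * θ := by
  rw [zetaDeriv, one_sub_two_mul_one_sub_cos_div_two, arccos_cos hθ.1 hθ.2]

lemma zeta_pos {Δ z : ℝ} (hΔ : Δ ≤ 1) (hz : z ∈ Ioo 0 1) : 0 < zeta Δ z := by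
  obtain ⟨θ, hθ, rfl⟩ := exists_eq_one_sub_cos_div_two hz
  rw [zeta_one_sub_cos_div_two Δ (Ioo_subset_Icc_self hθ), sub_pos, div_mul_eq_mul_div,
    div_lt_div_iff₀ pi_pos two_pos]
  have hpos := sin_sub_mul_cos_pos (Ioo_subset_Ioc_self hθ)
  nlinarith [sin_sub_mul_cos_lt hθ]

lemma mul_one_add_two_mul_zetaDeriv_le {Δ z : ℝ} (hΔ : 0 ≤ Δ) (hz : z ∈ Ioo 0 1) :
    z * (1 + 2 * zetaDeriv Δ z) ≤ 3 * zeta Δ z := by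
  obtain ⟨θ, hθ, rfl⟩ := exists_eq_one_sub_cos_div_two hz
  rw [zeta_one_sub_cos_div_two Δ (Ioo_subset_Icc_self hθ),
    zetaDeriv_one_sub_cos_div_two Δ (Ioo_subset_Icc_self hθ)]
  have hθ3 := three_mul_sin_lt (Ioo_subset_Ioc_self hθ)
  have key : 3 * ((1 - cos θ) / 2 - Δ / π * (sin θ - θ * cos θ))
      - (1 - cos θ) / 2 * (1 + 2 * (1 - 2 * Δ / π * θ))
      = Δ / π * (2 * θ + θ * cos θ - 3 * sin θ) := by ring
  have : 0 ≤ Δ / π * (2 * θ + θ * cos θ - 3 * sin θ) :=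
    mul_nonneg (div_nonneg hΔ pi_pos.le) (by linarith)
  linarith

lemma hasDerivAt_one_sub_two_mul (z : ℝ) : HasDerivAt (fun z : ℝ => 1 - 2 * z) (-2) z := by
  simpa using ((hasDerivAt_id z).const_mul 2).const_sub 1

lemma hasDerivAt_arccos_one_sub_two_mul {z : ℝ} (hz : z ∈ Ioo 0 1) :
    HasDerivAt (fun z => arccos (1 - 2 * z)) (2 / √(1 - (1 - 2 * z) ^ 2)) z := by
  refine ((hasDerivAt_arccos (by linarith [hz.2]) (by linarith [hz.1])).comp z
    (hasDerivAt_one_sub_two_mul z)).congr_deriv ?_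
  ring

lemma hasDerivAt_zeta (Δ : ℝ) {z : ℝ} (hz : z ∈ Ioo 0 1) :
    HasDerivAt (zeta Δ) (zetaDeriv Δ z) z := by
  have hpos : 0 < 1 - (1 - 2 * z) ^ 2 := by nlinarith [hz.1, hz.2]
  have hlin := hasDerivAt_one_sub_two_mul z
  have hsqrt := ((hlin.pow 2).const_sub 1).sqrt hpos.ne'
  have hprod := hlin.mul (hasDerivAt_arccos_one_sub_two_mul hz)
  refine ((hasDerivAt_id z).sub ((hsqrt.sub hprod).const_mul (Δ * (1 / π)))).congr_deriv ?_
  have hsqrt_ne : √(1 - (1 - 2 * z) ^ 2) ≠ 0 := (sqrt_pos.2 hpos).ne'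
  simp only [Pi.pow_apply, zetaDeriv]
  field_simp
  ring

lemma hasDerivAt_zetaDeriv (Δ : ℝ) {z : ℝ} (hz : z ∈ Ioo 0 1) :
    HasDerivAt (zetaDeriv Δ) (-(4 * Δ) / (π * √(1 - (1 - 2 * z) ^ 2))) z := by
  refine (((hasDerivAt_arccos_one_sub_two_mul hz).const_mul (2 * Δ / π)).const_sub 1).congr_deriv
    ?_
  field_simp
  ring

noncomputable def omegaDeriv (Δ w : ℝ) : ℝ :=
  zetaDeriv Δ (w ^ 2)⁻¹ / (w ^ 3 * zeta Δ (w ^ 2)⁻¹ * √(zeta Δ (w ^ 2)⁻¹))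

noncomputable def omegaDeriv2 (Δ w : ℝ) : ℝ :=
  (3 * zetaDeriv Δ (w ^ 2)⁻¹ ^ 2
      + 8 * Δ * zeta Δ (w ^ 2)⁻¹ / (π * √(1 - (1 - 2 * (w ^ 2)⁻¹) ^ 2))
      - 3 * w ^ 2 * zeta Δ (w ^ 2)⁻¹ * zetaDeriv Δ (w ^ 2)⁻¹)
    / (w ^ 6 * zeta Δ (w ^ 2)⁻¹ ^ 2 * √(zeta Δ (w ^ 2)⁻¹))

lemma inv_sq_mem_Ioo {w : ℝ} (hw : 1 < w) : (w ^ 2)⁻¹ ∈ Ioo 0 1 :=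
  ⟨by positivity, inv_lt_one_of_one_lt₀ (one_lt_pow₀ hw two_ne_zero)⟩

lemma hasDerivAt_zeta_inv_sq (Δ : ℝ) {w : ℝ} (hw : 1 < w) :
    HasDerivAt (fun w => zeta Δ (w ^ 2)⁻¹) (zetaDeriv Δ (w ^ 2)⁻¹ * (-2 / w ^ 3)) w := by
  have hw0 : w ≠ 0 := by positivity
  refine (hasDerivAt_zeta Δ (inv_sq_mem_Ioo hw)).comp w
    (((hasDerivAt_pow 2 w).inv (pow_ne_zero 2 hw0)).congr_deriv ?_)
  field_simp
  ring

lemma hasDerivAt_omegaMap {Δ w : ℝ} (hΔ : Δ ≤ 1) (hw : 1 < w) :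
    HasDerivAt (omegaMap Δ) (omegaDeriv Δ w) w := by
  have hζ := zeta_pos hΔ (inv_sq_mem_Ioo hw)
  have hsqrt := sqrt_pos.2 hζ
  refine (((hasDerivAt_zeta_inv_sq Δ hw).sqrt hζ.ne').inv hsqrt.ne').congr_deriv ?_
  have hw0 : w ≠ 0 := by positivity
  rw [omegaDeriv]
  have hS := sq_sqrt hζ.le
  set S := √(zeta Δ (w ^ 2)⁻¹)
  rw [← hS]
  field_simp

lemma hasDerivAt_omegaDeriv {Δ w : ℝ} (hΔ : Δ ≤ 1) (hw : 1 < w) :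
    HasDerivAt (omegaDeriv Δ) (omegaDeriv2 Δ w) w := by
  have hz := inv_sq_mem_Ioo hw
  have hζ := zeta_pos hΔ hz
  have hsqrt := sqrt_pos.2 hζ
  have hw0 : w ≠ 0 := by positivity
  have hnum := (hasDerivAt_zetaDeriv Δ hz).comp w
    (((hasDerivAt_pow 2 w).inv (pow_ne_zero 2 hw0)))
  have hden := ((hasDerivAt_pow 3 w).mul (hasDerivAt_zeta_inv_sq Δ hw)).mul
    ((hasDerivAt_zeta_inv_sq Δ hw).sqrt hζ.ne')
  refine (hnum.div hden (by simp only [Pi.mul_apply]; positivity)).congr_deriv ?_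
  have hs : √(1 - (1 - 2 * (w ^ 2)⁻¹) ^ 2) ≠ 0 :=
    (sqrt_pos.2 (by nlinarith [hz.1, hz.2])).ne'
  simp only [Pi.mul_apply, Pi.inv_apply, Function.comp_apply, omegaDeriv2]
  have hS := sq_sqrt hζ.le
  set S := √(zeta Δ (w ^ 2)⁻¹)
  rw [← hS]
  field_simp
  ring

lemma omegaDeriv2_numerator_nonneg {Δ z : ℝ} (hΔ : Δ ∈ Icc 0 1) (hz : z ∈ Ioo 0 1) :
    0 ≤ 3 * zetaDeriv Δ z ^ 2 + 8 * Δ * zeta Δ z / (π * √(1 - (1 - 2 * z) ^ 2))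
      - 3 * z⁻¹ * zeta Δ z * zetaDeriv Δ z := by
  obtain ⟨θ, hθ, rfl⟩ := exists_eq_one_sub_cos_div_two hz
  have hθ' := Ioo_subset_Icc_self hθ
  rw [zeta_one_sub_cos_div_two Δ hθ', zetaDeriv_one_sub_cos_div_two Δ hθ',
    sqrt_one_sub_one_sub_two_mul_sq hθ']
  have hsin := sin_pos_of_pos_of_lt_pi hθ.1 hθ.2
  have hcos : 0 < 1 - cos θ := by linarith [hz.1]
  have hscale : 0 < (1 - cos θ) / 2 * sin θ * π ^ 2 := by positivity
  refine (mul_nonneg_iff_of_pos_left hscale).1 ((convexity_trig_inequality hΔ hθ).trans_eq ?_)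
  field_simp
  ring

lemma omegaDeriv2_nonneg {Δ w : ℝ} (hΔ : Δ ∈ Icc 0 1) (hw : 1 < w) : 0 ≤ omegaDeriv2 Δ w := by
  have hnum := omegaDeriv2_numerator_nonneg hΔ (inv_sq_mem_Ioo hw)
  rw [inv_inv] at hnum
  exact div_nonneg hnum (by positivity)

lemma omegaDeriv_le_one {Δ w : ℝ} (hΔ : Δ ∈ Icc 0 1) (hw : 1 < w) : omegaDeriv Δ w ≤ 1 := by
  have hz := inv_sq_mem_Ioo hw
  have hζ := zeta_pos hΔ.2 hz
  have hS := sq_sqrt hζ.le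
  have hD : 0 < w ^ 3 * zeta Δ (w ^ 2)⁻¹ * √(zeta Δ (w ^ 2)⁻¹) := by positivity
  have hbound := mul_one_add_two_mul_zetaDeriv_le hΔ.1 hz
  rw [omegaDeriv, div_le_one hD]
  set z := (w ^ 2)⁻¹ with hz_def
  set a := zetaDeriv Δ z
  set ζ := zeta Δ z
  obtain ha | ha := le_or_gt a 0
  · linarith
  have hamgm : 27 * a ^ 2 ≤ (1 + 2 * a) ^ 3 := by nlinarith [sq_nonneg (a - 1)]
  have hcube : (z * (1 + 2 * a)) ^ 3 ≤ (3 * ζ) ^ 3 := pow_le_pow_left₀ (by positivity) hbound 3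
  have hwz : w ^ 6 * z ^ 3 = 1 := by rw [hz_def]; field_simp
  have hsq : a ^ 2 * z ^ 3 ≤ (w ^ 3 * ζ * √ζ) ^ 2 * z ^ 3 := by
    have : (w ^ 3 * ζ * √ζ) ^ 2 * z ^ 3 = ζ ^ 3 := by
      linear_combination ζ ^ 2 * w ^ 6 * z ^ 3 * hS + ζ ^ 3 * hwz
    nlinarith [pow_pos hz.1 3]
  exact (pow_le_pow_iff_left₀ ha.le hD.le two_ne_zero).1
    (le_of_mul_le_mul_right hsq (pow_pos hz.1 3))

/-- `ω` is convex on `(1,∞)` and `ω'(w) ≤ 1` there. -/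
theorem omega_convex_deriv_le_one (Δ : ℝ) (hΔ : Δ ∈ Set.Ioc (0 : ℝ) 1) :
    ConvexOn ℝ (Set.Ioi (1 : ℝ)) (omegaMap Δ) ∧
    ∀ w ∈ Set.Ioi (1 : ℝ), deriv (omegaMap Δ) w ≤ 1 := by
  have hΔ' : Δ ∈ Icc 0 1 := Ioc_subset_Icc_self hΔ
  refine ⟨convexOn_of_hasDerivWithinAt2_nonneg (convex_Ioi 1) (f' := omegaDeriv Δ)
    (f'' := omegaDeriv2 Δ)
    (fun w hw => (hasDerivAt_omegaMap hΔ.2 hw).continuousAt.continuousWithinAt) ?_ ?_ ?_,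
    fun w hw => (hasDerivAt_omegaMap hΔ.2 hw).deriv ▸ omegaDeriv_le_one hΔ' hw⟩
  all_goals simp only [interior_Ioi]
  · exact fun w hw => (hasDerivAt_omegaMap hΔ.2 hw).hasDerivWithinAt
  · exact fun w hw => (hasDerivAt_omegaDeriv hΔ.2 hw).hasDerivWithinAt
  · exact fun w hw => omegaDeriv2_nonneg hΔ' hw
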